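/- Consider the LEQR Riccati recursion for (A, B) producing (P_t, P̃_t, K_t), and the LEQR Riccati recursion with the same Q, Q_T, R, γ, T for estimated matrices (A′, B′) producing (P′_t, P̃′_t, K′_t), assuming I_n − γP′_{t+1} ≻ 0 for every t so both recursions are well defined. Assume R ⪰ I_m. Let Γ̃ ≥ 1 satisfy 1 − γΓ̃ > 0 and ‖A‖, ‖B‖, ‖Q‖, ‖Q_T‖, ‖R‖ ≤ Γ̃ − 1 and ‖P_t‖, ‖P̃_t‖, ‖K_{t−1}‖ ≤ Γ̃ − 1 for every t; set 𝓛 = 1/(1 − γΓ̃)² and 𝒱 = 2(𝓛 + 1)Γ̃³. Suppose ε > 0 satisfies ‖A′ − A‖ ≤ ε, ‖B′ − B‖ ≤ ε and (10𝒱²𝓛Γ̃⁴)^T ε ≤ 1. Then for every t = 0, 1, …, T−1: ‖K′_t − K_t‖ ≤ (10𝒱²𝓛Γ̃⁴)^{T−t−1}𝒱ε and ‖P′_t − P_t‖ ≤ (10𝒱²𝓛Γ̃⁴)^{T−t}ε. -/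

import Mathlib

open Matrix
open scoped Matrix.Norms.L2Operator

/-!
Backward induction on `t`. One step `P_{t+1} ↦ (K_t, P_t)` of the recursion is Lipschitz in
`(A, B, P_{t+1})`, with constants `𝒱` and `10𝒱²𝓛Γ̃⁴`, as long as the perturbation is at most `1`:
since `γP̃ = (I - γP)⁻¹ - I`, the resolvent identity makes `P ↦ P̃` `𝓛`-Lipschitz; since
`BᵀP̃B + R ⪰ I`, its inverse has norm at most `1`; and the products defining `K_t` and `P_t` are
expanded telescopically. The hypothesis `(10𝒱²𝓛Γ̃⁴)^T ε ≤ 1` keeps every intermediate error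
`(10𝒱²𝓛Γ̃⁴)^k ε` below `1`.
-/

namespace Matrix

variable {l m n : Type*} [Fintype l] [Fintype m] [Fintype n]

lemma PosSemidef.transpose_mul_mul_same {A : Matrix n n ℝ} (hA : A.PosSemidef)
    (B : Matrix n m ℝ) : (Bᵀ * A * B).PosSemidef := by
  simpa using hA.conjTranspose_mul_mul_same B

variable [DecidableEq m] [DecidableEq n]

lemma l2_opNorm_one_le : ‖(1 : Matrix n n ℝ)‖ ≤ 1 := by
  rw [cstar_norm_def, map_one]
  exact ContinuousLinearMap.norm_id_le

lemma l2_opNorm_transpose (A : Matrix m n ℝ) : ‖Aᵀ‖ = ‖A‖ := by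
  rw [← conjTranspose_eq_transpose_of_trivial, l2_opNorm_conjTranspose]

lemma l2_opNorm_mul_mul_le (A : Matrix l m ℝ) (B : Matrix m m ℝ) (C : Matrix m n ℝ) :
    ‖A * B * C‖ ≤ ‖A‖ * ‖B‖ * ‖C‖ :=
  (l2_opNorm_mul _ _).trans (by gcongr; exact l2_opNorm_mul _ _)

lemma l2_opNorm_inv_one_sub_le {X : Matrix n n ℝ} (h : ‖X‖ < 1) :
    ‖(1 - X)⁻¹‖ ≤ (1 - ‖X‖)⁻¹ := by
  rw [nonsing_inv_eq_ringInverse, ← geom_series_eq_inverse X h]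
  linarith [tsum_geometric_le_of_norm_lt_one X h, l2_opNorm_one_le (n := n)]

open scoped RealInnerProductSpace in
lemma l2_opNorm_inv_le_one_of_posSemidef_sub_one {M : Matrix n n ℝ} (h : (M - 1).PosSemidef) :
    ‖M⁻¹‖ ≤ 1 := by
  have hM : IsUnit M.det := by
    simpa using (isUnit_iff_isUnit_det _).mp (PosDef.posSemidef_add h PosDef.one).isUnit
  set T := toEuclideanCLM (n := n) (𝕜 := ℝ) M
  set S := toEuclideanCLM (n := n) (𝕜 := ℝ) M⁻¹
  have coercive (x : EuclideanSpace ℝ n) : ⟪x, x⟫ ≤ ⟪x, T x⟫ := by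
    have := h.dotProduct_mulVec_nonneg (WithLp.ofLp x)
    rw [star_trivial, ← inner_toEuclideanCLM, map_sub, map_one,
      _root_.sub_apply, inner_sub_right, one_apply_eq_self] at this
    linarith
  have hTS (y : EuclideanSpace ℝ n) : T (S y) = y := by
    rw [← mul_apply_eq_comp, ← map_mul, mul_nonsing_inv _ hM, map_one]
    rfl
  rw [cstar_norm_def]
  refine ContinuousLinearMap.opNorm_le_bound _ zero_le_one fun y => ?_
  have h1 := coercive (S y)
  rw [hTS, real_inner_self_eq_norm_sq] at h1
  nlinarith [real_inner_le_norm (S y) y, norm_nonneg (S y), norm_nonneg y]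

lemma l2_opNorm_transpose_mul_mul_sub_le [DecidableEq l] (X X' : Matrix l m ℝ)
    (Y Y' : Matrix l l ℝ) (Z Z' : Matrix l n ℝ) :
    ‖X'ᵀ * Y' * Z' - Xᵀ * Y * Z‖
      ≤ ‖X' - X‖ * ‖Y'‖ * ‖Z'‖ + ‖X‖ * ‖Y' - Y‖ * ‖Z'‖ + ‖X‖ * ‖Y‖ * ‖Z' - Z‖ := by
  have split : X'ᵀ * Y' * Z' - Xᵀ * Y * Z
      = (X' - X)ᵀ * Y' * Z' + Xᵀ * (Y' - Y) * Z' + Xᵀ * Y * (Z' - Z) := by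
    simp only [transpose_sub, Matrix.sub_mul, Matrix.mul_sub]
    abel
  rw [split]
  refine (norm_add₃_le).trans ?_
  gcongr <;> exact (l2_opNorm_mul_mul_le _ _ _).trans_eq (by rw [l2_opNorm_transpose])

lemma l2_opNorm_add_mul_sub_le (A A' : Matrix l n ℝ) (B B' : Matrix l m ℝ)
    (K K' : Matrix m n ℝ) :
    ‖(A' + B' * K') - (A + B * K)‖ ≤ ‖A' - A‖ + ‖B' - B‖ * ‖K'‖ + ‖B‖ * ‖K' - K‖ := by
  have split : (A' + B' * K') - (A + B * K) = (A' - A) + (B' - B) * K' + B * (K' - K) := by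
    simp only [Matrix.sub_mul, Matrix.mul_sub]
    abel
  rw [split]
  refine (norm_add₃_le).trans ?_
  gcongr <;> exact l2_opNorm_mul _ _

lemma l2_opNorm_neg_inv_mul_sub_le {M M' : Matrix m m ℝ} {N N' : Matrix m n ℝ}
    (hM : IsUnit M) (hM' : IsUnit M') :
    ‖-(M'⁻¹ * N') - -(M⁻¹ * N)‖ ≤ ‖M'⁻¹‖ * (‖N' - N‖ + ‖M' - M‖ * ‖M⁻¹ * N‖) := by
  have split : -(M'⁻¹ * N') - -(M⁻¹ * N) = -(M'⁻¹ * ((N' - N) - (M' - M) * (M⁻¹ * N))) := by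
    rw [Matrix.sub_mul, mul_nonsing_inv_cancel_left _ _ ((isUnit_iff_isUnit_det _).mp hM),
      Matrix.mul_sub, Matrix.mul_sub, Matrix.mul_sub,
      nonsing_inv_mul_cancel_left _ _ ((isUnit_iff_isUnit_det _).mp hM')]
    abel
  rw [split, norm_neg]
  refine (l2_opNorm_mul _ _).trans ?_
  gcongr
  exact (norm_sub_le _ _).trans (by gcongr; exact l2_opNorm_mul _ _)

end Matrix

section RiskAdjusted

variable {n : Type*} [Fintype n] [DecidableEq n]

/-- The matrix `P̃` of the LEQR recursion. -/
noncomputable def riskAdjusted (γ : ℝ) (P : Matrix n n ℝ) : Matrix n n ℝ :=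
  P + γ • (P * (1 - γ • P)⁻¹ * P)

lemma smul_riskAdjusted {γ : ℝ} {P : Matrix n n ℝ} (h : IsUnit (1 - γ • P)) :
    γ • riskAdjusted γ P = (1 - γ • P)⁻¹ - 1 := by
  have key (X : Matrix n n ℝ) (hX : IsUnit X.det) :
      (1 - X) + (1 - X) * X⁻¹ * (1 - X) = X⁻¹ - 1 := by
    simp only [sub_mul, mul_sub, one_mul, mul_one, mul_nonsing_inv X hX, nonsing_inv_mul X hX]
    abel
  rw [riskAdjusted, smul_add]
  simpa [smul_mul_assoc, mul_smul_comm] using key _ ((isUnit_iff_isUnit_det _).mp h)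

lemma riskAdjusted_sub_riskAdjusted {γ : ℝ} (hγ : γ ≠ 0) {P P' : Matrix n n ℝ}
    (h : IsUnit (1 - γ • P)) (h' : IsUnit (1 - γ • P')) :
    riskAdjusted γ P' - riskAdjusted γ P = (1 - γ • P')⁻¹ * (P' - P) * (1 - γ • P)⁻¹ := by
  apply smul_right_injective _ hγ
  beta_reduce
  rw [smul_sub, smul_riskAdjusted h, smul_riskAdjusted h', sub_sub_sub_cancel_right,
    inv_sub_inv (iff_of_true h' h), show 1 - γ • P - (1 - γ • P') = γ • (P' - P) by
      rw [smul_sub]; abel, mul_smul_comm, smul_mul_assoc]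

lemma Matrix.PosSemidef.riskAdjusted {γ : ℝ} (hγ : 0 ≤ γ) {P : Matrix n n ℝ}
    (hP : P.PosSemidef) (h : (1 - γ • P).PosSemidef) : (riskAdjusted γ P).PosSemidef := by
  refine hP.add (PosSemidef.smul ?_ hγ)
  have := h.inv.conjTranspose_mul_mul_same P
  rwa [hP.isHermitian.eq] at this

lemma l2_opNorm_inv_one_sub_smul_le {γ Γ : ℝ} {P : Matrix n n ℝ} (hγ : 0 ≤ γ)
    (hγΓ : 0 < 1 - γ * Γ) (hP : ‖P‖ ≤ Γ) : ‖(1 - γ • P)⁻¹‖ ≤ (1 - γ * Γ)⁻¹ := by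
  have hγP : ‖γ • P‖ ≤ γ * Γ := by
    rw [norm_smul, Real.norm_of_nonneg hγ]
    gcongr
  calc ‖(1 - γ • P)⁻¹‖ ≤ (1 - ‖γ • P‖)⁻¹ := l2_opNorm_inv_one_sub_le (by linarith)
    _ ≤ (1 - γ * Γ)⁻¹ := by gcongr

lemma l2_opNorm_riskAdjusted_sub_le {γ Γ : ℝ} {P P' : Matrix n n ℝ} (hγ : 0 < γ)
    (hγΓ : 0 < 1 - γ * Γ) (hP : ‖P‖ ≤ Γ) (hP' : ‖P'‖ ≤ Γ) :
    ‖riskAdjusted γ P' - riskAdjusted γ P‖ ≤ 1 / (1 - γ * Γ) ^ 2 * ‖P' - P‖ := by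
  have isUnit_of_le {Q : Matrix n n ℝ} (hQ : ‖Q‖ ≤ Γ) : IsUnit (1 - γ • Q) := by
    have : ‖γ • Q‖ < 1 := by
      rw [norm_smul, Real.norm_of_nonneg hγ.le]
      nlinarith
    exact (Units.oneSub _ this).isUnit
  rw [riskAdjusted_sub_riskAdjusted hγ.ne' (isUnit_of_le hP) (isUnit_of_le hP')]
  calc _ ≤ (1 - γ * Γ)⁻¹ * ‖P' - P‖ * (1 - γ * Γ)⁻¹ := by
        refine (l2_opNorm_mul_mul_le _ _ _).trans ?_
        gcongr <;> exact l2_opNorm_inv_one_sub_smul_le hγ.le hγΓ ‹_›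
    _ = _ := by field_simp

end RiskAdjusted

section LQStep

variable {m n : Type*} [Fintype m] [Fintype n]

def lqCost (A : Matrix n n ℝ) (B : Matrix n m ℝ) (Q : Matrix n n ℝ) (R : Matrix m m ℝ)
    (K : Matrix m n ℝ) (X : Matrix n n ℝ) : Matrix n n ℝ :=
  Q + Kᵀ * R * K + (A + B * K)ᵀ * X * (A + B * K)

lemma Matrix.PosSemidef.lqCost {A : Matrix n n ℝ} {B : Matrix n m ℝ} {Q : Matrix n n ℝ}
    {R : Matrix m m ℝ} {X : Matrix n n ℝ} (hQ : Q.PosSemidef) (hR : R.PosSemidef)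
    (hX : X.PosSemidef) (K : Matrix m n ℝ) : (lqCost A B Q R K X).PosSemidef :=
  (hQ.add (hR.transpose_mul_mul_same K)).add (hX.transpose_mul_mul_same _)

variable [DecidableEq m] [DecidableEq n]

noncomputable def lqGain (A : Matrix n n ℝ) (B : Matrix n m ℝ) (R : Matrix m m ℝ)
    (X : Matrix n n ℝ) : Matrix m n ℝ :=
  -((Bᵀ * X * B + R)⁻¹ * (Bᵀ * X * A))

lemma l2_opNorm_transpose_mul_mul_sub_le_of_le {l : Type*} [Fintype l] [DecidableEq l]
    {X X' : Matrix n m ℝ} {Y Y' : Matrix n n ℝ} {Z Z' : Matrix n l ℝ} {Γ L d : ℝ}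
    (hX : ‖X‖ ≤ Γ) (hY : ‖Y‖ ≤ Γ) (hY' : ‖Y'‖ ≤ L * Γ) (hZ' : ‖Z'‖ ≤ Γ)
    (hXd : ‖X' - X‖ ≤ d) (hYd : ‖Y' - Y‖ ≤ L * d) (hZd : ‖Z' - Z‖ ≤ d) :
    ‖X'ᵀ * Y' * Z' - Xᵀ * Y * Z‖ ≤ (2 * L + 1) * Γ ^ 2 * d := by
  have hΓ : 0 ≤ Γ := (norm_nonneg _).trans hX
  have hd : 0 ≤ d := (norm_nonneg _).trans hXd
  have hLΓ : 0 ≤ L * Γ := (norm_nonneg _).trans hY'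
  have hLd : 0 ≤ L * d := (norm_nonneg _).trans hYd
  calc _ ≤ ‖X' - X‖ * ‖Y'‖ * ‖Z'‖ + ‖X‖ * ‖Y' - Y‖ * ‖Z'‖ + ‖X‖ * ‖Y‖ * ‖Z' - Z‖ :=
        l2_opNorm_transpose_mul_mul_sub_le _ _ _ _ _ _
    _ ≤ d * (L * Γ) * Γ + Γ * (L * d) * Γ + Γ * Γ * d := by gcongr
    _ = (2 * L + 1) * Γ ^ 2 * d := by ring

lemma l2_opNorm_lqGain_sub_le {A A' : Matrix n n ℝ} {B B' : Matrix n m ℝ} {R : Matrix m m ℝ}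
    {X X' : Matrix n n ℝ} {Γ L d : ℝ} (hR : (R - 1).PosSemidef) (hX : X.PosSemidef)
    (hX' : X'.PosSemidef) (hA : ‖A‖ ≤ Γ - 1) (hB : ‖B‖ ≤ Γ - 1) (hXn : ‖X‖ ≤ Γ)
    (hX'n : ‖X'‖ ≤ L * Γ) (hK : ‖lqGain A B R X‖ ≤ Γ - 1) (hd : d ≤ 1)
    (hAd : ‖A' - A‖ ≤ d) (hBd : ‖B' - B‖ ≤ d) (hXd : ‖X' - X‖ ≤ L * d) :
    ‖lqGain A' B' R X' - lqGain A B R X‖ ≤ (2 * L + 1) * Γ ^ 3 * d := by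
  have one_le {C : Matrix n m ℝ} {Y : Matrix n n ℝ} (hY : Y.PosSemidef) :
      (Cᵀ * Y * C + R - 1).PosSemidef := by
    simpa [add_sub_assoc] using (hY.transpose_mul_mul_same C).add hR
  have isUnit {C : Matrix n m ℝ} {Y : Matrix n n ℝ} (hY : Y.PosSemidef) :
      IsUnit (Cᵀ * Y * C + R) := by
    simpa using (PosDef.posSemidef_add (one_le (C := C) hY) PosDef.one).isUnit
  have hBΓ : ‖B‖ ≤ Γ := by linarith
  have hA' : ‖A'‖ ≤ Γ := by linarith [norm_le_norm_add_norm_sub' A' A]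
  have hB' : ‖B'‖ ≤ Γ := by linarith [norm_le_norm_add_norm_sub' B' B]
  have hN := l2_opNorm_transpose_mul_mul_sub_le_of_le hBΓ hXn hX'n hA' hBd hXd hAd
  have hM := l2_opNorm_transpose_mul_mul_sub_le_of_le hBΓ hXn hX'n hB' hBd hXd hBd
  rw [lqGain, norm_neg] at hK
  rw [lqGain, lqGain]
  calc _ ≤ ‖(B'ᵀ * X' * B' + R)⁻¹‖ * (‖B'ᵀ * X' * A' - Bᵀ * X * A‖
          + ‖B'ᵀ * X' * B' + R - (Bᵀ * X * B + R)‖ * ‖(Bᵀ * X * B + R)⁻¹ * (Bᵀ * X * A)‖) :=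
        l2_opNorm_neg_inv_mul_sub_le (isUnit (C := B) hX) (isUnit (C := B') hX')
    _ ≤ 1 * ((2 * L + 1) * Γ ^ 2 * d + (2 * L + 1) * Γ ^ 2 * d * (Γ - 1)) := by
        rw [add_sub_add_right_eq_sub]
        gcongr
        exacts [l2_opNorm_inv_le_one_of_posSemidef_sub_one (one_le hX'), (norm_nonneg _).trans hM]
    _ = (2 * L + 1) * Γ ^ 3 * d := by ring

lemma l2_opNorm_lqCost_sub_le {A A' : Matrix n n ℝ} {B B' : Matrix n m ℝ} {Q : Matrix n n ℝ}
    {R : Matrix m m ℝ} {K K' : Matrix m n ℝ} {X X' : Matrix n n ℝ} {Γ L V d : ℝ}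
    (hL : 1 ≤ L) (hV : V = 2 * (L + 1) * Γ ^ 3) (hA : ‖A‖ ≤ Γ - 1) (hB : ‖B‖ ≤ Γ - 1)
    (hR : ‖R‖ ≤ Γ - 1) (hK : ‖K‖ ≤ Γ - 1) (hXn : ‖X‖ ≤ Γ) (hX'n : ‖X'‖ ≤ L * Γ) (hd : d ≤ 1)
    (hAd : ‖A' - A‖ ≤ d) (hBd : ‖B' - B‖ ≤ d) (hKd : ‖K' - K‖ ≤ (2 * L + 1) * Γ ^ 3 * d)
    (hXd : ‖X' - X‖ ≤ L * d) :
    ‖lqCost A' B' Q R K' X' - lqCost A B Q R K X‖ ≤ 10 * V ^ 2 * L * Γ ^ 4 * d := by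
  have hΓ : 1 ≤ Γ := by linarith [norm_nonneg A]
  have hd0 : 0 ≤ d := (norm_nonneg _).trans hAd
  set κ := (2 * L + 1) * Γ ^ 3
  have hκ : 0 ≤ κ := by positivity
  have hκV : κ + Γ ≤ V := by
    have : Γ ≤ Γ ^ 3 := le_self_pow₀ hΓ (by norm_num)
    rw [hV]; linarith
  have hV0 : 0 ≤ V := by linarith
  have hKdV : ‖K' - K‖ ≤ V * d := hKd.trans (by gcongr; linarith)
  have hK' : ‖K'‖ ≤ Γ - 1 + κ := by
    linarith [norm_le_norm_add_norm_sub' K' K, mul_le_of_le_one_right hκ hd]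
  have hS : ‖A + B * K‖ ≤ Γ ^ 2 := by
    calc ‖A + B * K‖ ≤ ‖A‖ + ‖B‖ * ‖K‖ :=
          (norm_add_le _ _).trans (by gcongr; exact l2_opNorm_mul _ _)
      _ ≤ (Γ - 1) + (Γ - 1) * (Γ - 1) := by gcongr
      _ ≤ Γ ^ 2 := by nlinarith
  have hSd : ‖A' + B' * K' - (A + B * K)‖ ≤ V * Γ * d := by
    calc _ ≤ ‖A' - A‖ + ‖B' - B‖ * ‖K'‖ + ‖B‖ * ‖K' - K‖ := l2_opNorm_add_mul_sub_le _ _ _ _ _ _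
      _ ≤ d + d * (Γ - 1 + κ) + (Γ - 1) * (κ * d) := by gcongr
      _ = (κ + 1) * Γ * d := by ring
      _ ≤ V * Γ * d := by gcongr; linarith
  have hS' : ‖A' + B' * K'‖ ≤ 2 * V * Γ := by
    have : V * Γ * d ≤ V * Γ := mul_le_of_le_one_right (by positivity) hd
    have : Γ ^ 2 ≤ V * Γ := by nlinarith
    nlinarith [norm_le_norm_add_norm_sub' (A' + B' * K') (A + B * K)]
  calc _ = ‖(K'ᵀ * R * K' - Kᵀ * R * K) + ((A' + B' * K')ᵀ * X' * (A' + B' * K')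
        - (A + B * K)ᵀ * X * (A + B * K))‖ := by rw [lqCost, lqCost]; congr 1; abel
    _ ≤ (‖K' - K‖ * ‖R‖ * ‖K'‖ + ‖K‖ * ‖R - R‖ * ‖K'‖ + ‖K‖ * ‖R‖ * ‖K' - K‖)
        + (‖A' + B' * K' - (A + B * K)‖ * ‖X'‖ * ‖A' + B' * K'‖
          + ‖A + B * K‖ * ‖X' - X‖ * ‖A' + B' * K'‖
          + ‖A + B * K‖ * ‖X‖ * ‖A' + B' * K' - (A + B * K)‖) :=
        (norm_add_le _ _).trans (add_le_add (l2_opNorm_transpose_mul_mul_sub_le _ _ _ _ _ _)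
          (l2_opNorm_transpose_mul_mul_sub_le _ _ _ _ _ _))
    _ ≤ (V * d * Γ * V + Γ * 0 * V + Γ * Γ * (V * d))
        + (V * Γ * d * (L * Γ) * (2 * V * Γ) + Γ ^ 2 * (L * d) * (2 * V * Γ)
          + Γ ^ 2 * Γ * (V * Γ * d)) := by
        rw [sub_self, norm_zero]
        gcongr
        all_goals linarith
    _ = (V ^ 2 * Γ + V * Γ ^ 2 + 2 * V ^ 2 * L * Γ ^ 3 + 2 * V * L * Γ ^ 3 + V * Γ ^ 4) * d := by
        ring
    _ ≤ 10 * V ^ 2 * L * Γ ^ 4 * d := by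
        gcongr
        -- every monomial on the left divides `V²LΓ⁴`, and `V, L, Γ ≥ 1`
        obtain ⟨g, hg, rfl⟩ : ∃ g, 0 ≤ g ∧ Γ = 1 + g := ⟨Γ - 1, by linarith, by ring⟩
        obtain ⟨l, hl, rfl⟩ : ∃ l, 0 ≤ l ∧ L = 1 + l := ⟨L - 1, by linarith, by ring⟩
        obtain ⟨v, hv, rfl⟩ : ∃ v, 0 ≤ v ∧ V = 1 + v := ⟨V - 1, by linarith, by ring⟩
        rw [← sub_nonneg]
        ring_nf
        positivity

end LQStep

lemma one_le_one_div_one_sub_sq {x : ℝ} (hx : 0 ≤ x) (hx1 : 0 < 1 - x) : 1 ≤ 1 / (1 - x) ^ 2 :=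
  one_le_one_div (by positivity) (pow_le_one₀ hx1.le (by linarith))

theorem riccati_step_perturbation {m n : Type*} [Fintype m] [Fintype n] [DecidableEq m]
    [DecidableEq n] {A A' : Matrix n n ℝ} {B B' : Matrix n m ℝ} {Q : Matrix n n ℝ}
    {R : Matrix m m ℝ} {P P' X X' : Matrix n n ℝ} {K K' : Matrix m n ℝ} {γ Γ L V d : ℝ}
    (hγ : 0 < γ) (hγΓ : 0 < 1 - γ * Γ) (hL : L = 1 / (1 - γ * Γ) ^ 2)
    (hV : V = 2 * (L + 1) * Γ ^ 3) (hR : (R - 1).PosSemidef) (hP : P.PosSemidef)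
    (hP' : P'.PosSemidef) (hwf : (1 - γ • P).PosDef) (hwf' : (1 - γ • P').PosDef)
    (hX : X = riskAdjusted γ P) (hX' : X' = riskAdjusted γ P') (hK : K = lqGain A B R X)
    (hK' : K' = lqGain A' B' R X') (hA : ‖A‖ ≤ Γ - 1) (hB : ‖B‖ ≤ Γ - 1) (hRn : ‖R‖ ≤ Γ - 1)
    (hPn : ‖P‖ ≤ Γ - 1) (hXn : ‖X‖ ≤ Γ - 1) (hKn : ‖K‖ ≤ Γ - 1) (hd : d ≤ 1)
    (hAd : ‖A' - A‖ ≤ d) (hBd : ‖B' - B‖ ≤ d) (hPd : ‖P' - P‖ ≤ d) :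
    ‖K' - K‖ ≤ V * d ∧
      ‖lqCost A' B' Q R K' X' - lqCost A B Q R K X‖ ≤ 10 * V ^ 2 * L * Γ ^ 4 * d := by
  have hΓ : 1 ≤ Γ := by linarith [norm_nonneg A]
  have hd0 : 0 ≤ d := (norm_nonneg _).trans hAd
  have hL1 : 1 ≤ L := hL ▸ one_le_one_div_one_sub_sq (by positivity) hγΓ
  have hXd : ‖X' - X‖ ≤ L * d := by
    rw [hX, hX', hL]
    refine (l2_opNorm_riskAdjusted_sub_le hγ hγΓ (by linarith) ?_).trans (by gcongr)
    linarith [norm_le_norm_add_norm_sub' P' P]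
  have hX'n : ‖X'‖ ≤ L * Γ := by
    nlinarith [norm_le_norm_add_norm_sub' X' X]
  have hX0 : X.PosSemidef := hX ▸ hP.riskAdjusted hγ.le hwf.posSemidef
  have hX'0 : X'.PosSemidef := hX' ▸ hP'.riskAdjusted hγ.le hwf'.posSemidef
  have hKd : ‖K' - K‖ ≤ (2 * L + 1) * Γ ^ 3 * d := by
    subst hK hK'
    exact l2_opNorm_lqGain_sub_le hR hX0 hX'0 hA hB (by linarith) hX'n hKn hd hAd hBd hXd
  refine ⟨hKd.trans ?_,
    l2_opNorm_lqCost_sub_le hL1 hV hA hB hRn hKn (by linarith) hX'n hd hAd hBd hKd hXd⟩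
  rw [hV]
  gcongr
  linarith

theorem leqr_riccati_perturbation_general {n m : ℕ} (T : ℕ)
    (γ Γ ε : ℝ)
    (A A' : Matrix (Fin n) (Fin n) ℝ) (B B' : Matrix (Fin n) (Fin m) ℝ)
    (Q QT : Matrix (Fin n) (Fin n) ℝ) (R : Matrix (Fin m) (Fin m) ℝ)
    (hγ : 0 < γ) (hQ : Q.PosSemidef) (hQT : QT.PosSemidef)
    (hR : (R - 1).PosSemidef)
    -- the LEQR Riccati recursion for (A, B)
    (P Ptil : ℕ → Matrix (Fin n) (Fin n) ℝ) (K : ℕ → Matrix (Fin m) (Fin n) ℝ)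
    (hPT : P T = QT)
    (hwf : ∀ t < T, (1 - γ • P (t + 1)).PosDef)
    (hPtil : ∀ t < T,
      Ptil (t + 1) = P (t + 1) + γ • (P (t + 1) * (1 - γ • P (t + 1))⁻¹ * P (t + 1)))
    (hK : ∀ t < T, K t = -((Bᵀ * Ptil (t + 1) * B + R)⁻¹ * (Bᵀ * Ptil (t + 1) * A)))
    (hP : ∀ t < T,
      P t = Q + (K t)ᵀ * R * K t + (A + B * K t)ᵀ * Ptil (t + 1) * (A + B * K t))
    -- the LEQR Riccati recursion for the estimated matrices (A', B')
    (P' Ptil' : ℕ → Matrix (Fin n) (Fin n) ℝ) (K' : ℕ → Matrix (Fin m) (Fin n) ℝ)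
    (hPT' : P' T = QT)
    (hwf' : ∀ t < T, (1 - γ • P' (t + 1)).PosDef)
    (hPtil' : ∀ t < T,
      Ptil' (t + 1) = P' (t + 1) + γ • (P' (t + 1) * (1 - γ • P' (t + 1))⁻¹ * P' (t + 1)))
    (hK' : ∀ t < T, K' t = -((B'ᵀ * Ptil' (t + 1) * B' + R)⁻¹ * (B'ᵀ * Ptil' (t + 1) * A')))
    (hP' : ∀ t < T,
      P' t = Q + (K' t)ᵀ * R * K' t + (A' + B' * K' t)ᵀ * Ptil' (t + 1) * (A' + B' * K' t))
    -- uniform norm bounds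
    (hΓ : 1 ≤ Γ) (hγΓ : 0 < 1 - γ * Γ)
    (hAn : ‖A‖ ≤ Γ - 1) (hBn : ‖B‖ ≤ Γ - 1)
    (hRn : ‖R‖ ≤ Γ - 1)
    (hPn : ∀ t ≤ T, ‖P t‖ ≤ Γ - 1)
    (hPtiln : ∀ t, 1 ≤ t → t ≤ T → ‖Ptil t‖ ≤ Γ - 1)
    (hKn : ∀ t < T, ‖K t‖ ≤ Γ - 1)
    -- constants
    (L V : ℝ) (hLdef : L = 1 / (1 - γ * Γ) ^ 2) (hVdef : V = 2 * (L + 1) * Γ ^ 3)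
    -- perturbation size
    (hε : 0 < ε) (hAdiff : ‖A' - A‖ ≤ ε) (hBdiff : ‖B' - B‖ ≤ ε)
    (hsmall : (10 * V ^ 2 * L * Γ ^ 4) ^ T * ε ≤ 1) :
    ∀ t < T,
      ‖K' t - K t‖ ≤ (10 * V ^ 2 * L * Γ ^ 4) ^ (T - t - 1) * V * ε ∧
      ‖P' t - P t‖ ≤ (10 * V ^ 2 * L * Γ ^ 4) ^ (T - t) * ε := by
  set C := 10 * V ^ 2 * L * Γ ^ 4
  have hL : 1 ≤ L := hLdef ▸ one_le_one_div_one_sub_sq (by positivity) hγΓ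
  have hV : 1 ≤ V := by rw [hVdef]; nlinarith [one_le_pow₀ (n := 3) hΓ]
  have hC : 1 ≤ C := by
    have := one_le_mul_of_one_le_of_one_le
      (one_le_mul_of_one_le_of_one_le (one_le_pow₀ (n := 2) hV) hL) (one_le_pow₀ (n := 4) hΓ)
    linarith
  have hR0 : R.PosSemidef := by simpa using hR.add PosSemidef.one
  have step (t : ℕ) (ht : t < T) (k : ℕ) (hk : k ≤ T)
      (hPs : (P (t + 1)).PosSemidef) (hP's : (P' (t + 1)).PosSemidef)
      (hPd : ‖P' (t + 1) - P (t + 1)‖ ≤ C ^ k * ε) :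
      ‖K' t - K t‖ ≤ V * (C ^ k * ε) ∧ ‖P' t - P t‖ ≤ C * (C ^ k * ε) := by
    have hε_le : ε ≤ C ^ k * ε := le_mul_of_one_le_left hε.le (one_le_pow₀ hC)
    rw [hP t ht, hP' t ht]
    exact riccati_step_perturbation hγ hγΓ hLdef hVdef hR hPs hP's (hwf t ht) (hwf' t ht)
      (hPtil t ht) (hPtil' t ht) (hK t ht) (hK' t ht) hAn hBn hRn (hPn _ ht)
      (hPtiln _ (by omega) ht) (hKn t ht)
      ((mul_le_mul_of_nonneg_right (pow_le_pow_right₀ hC hk) hε.le).trans hsmall)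
      (hAdiff.trans hε_le) (hBdiff.trans hε_le) hPd
  have back (t : ℕ) (ht : t ≤ T) :
      (P t).PosSemidef ∧ (P' t).PosSemidef ∧ ‖P' t - P t‖ ≤ C ^ (T - t) * ε := by
    induction ht using Nat.decreasingInduction with
    | self => simp [hPT, hPT', hQT, hε.le]
    | of_succ t ht ih =>
      obtain ⟨hPs, hP's, hPd⟩ := ih
      refine ⟨hP t ht ▸ hQ.lqCost hR0 (hPtil t ht ▸ hPs.riskAdjusted hγ.le (hwf t ht).posSemidef) _,
        hP' t ht ▸ hQ.lqCost hR0 (hPtil' t ht ▸ hP's.riskAdjusted hγ.le (hwf' t ht).posSemidef) _,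
        ?_⟩
      rw [show T - t = T - (t + 1) + 1 by omega, pow_succ', mul_assoc]
      exact (step t ht _ (by omega) hPs hP's hPd).2
  intro t ht
  obtain ⟨hPs, hP's, hPd⟩ := back (t + 1) ht
  obtain ⟨hKd, hPd'⟩ := step t ht _ (by omega) hPs hP's hPd
  rw [show T - t - 1 = T - (t + 1) by omega, show T - t = T - (t + 1) + 1 by omega, pow_succ']
  constructor <;> linarith

/-- Multi-step perturbation bounds for the LEQR Riccati recursion
(Lemma 7 of the paper). -/
theorem leqr_riccati_perturbation {n m : ℕ} (T : ℕ) (hT : 1 ≤ T)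
    (γ Γ ε : ℝ)
    (A A' : Matrix (Fin n) (Fin n) ℝ) (B B' : Matrix (Fin n) (Fin m) ℝ)
    (Q QT : Matrix (Fin n) (Fin n) ℝ) (R : Matrix (Fin m) (Fin m) ℝ)
    (hγ : 0 < γ) (hQ : Q.PosSemidef) (hQT : QT.PosSemidef) (hRpd : R.PosDef)
    (hR : (R - 1).PosSemidef)
    -- the LEQR Riccati recursion for (A, B)
    (P Ptil : ℕ → Matrix (Fin n) (Fin n) ℝ) (K : ℕ → Matrix (Fin m) (Fin n) ℝ)
    (hPT : P T = QT)
    (hwf : ∀ t < T, (1 - γ • P (t + 1)).PosDef)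
    (hPtil : ∀ t < T,
      Ptil (t + 1) = P (t + 1) + γ • (P (t + 1) * (1 - γ • P (t + 1))⁻¹ * P (t + 1)))
    (hK : ∀ t < T, K t = -((Bᵀ * Ptil (t + 1) * B + R)⁻¹ * (Bᵀ * Ptil (t + 1) * A)))
    (hP : ∀ t < T,
      P t = Q + (K t)ᵀ * R * K t + (A + B * K t)ᵀ * Ptil (t + 1) * (A + B * K t))
    -- the LEQR Riccati recursion for the estimated matrices (A', B')
    (P' Ptil' : ℕ → Matrix (Fin n) (Fin n) ℝ) (K' : ℕ → Matrix (Fin m) (Fin n) ℝ)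
    (hPT' : P' T = QT)
    (hwf' : ∀ t < T, (1 - γ • P' (t + 1)).PosDef)
    (hPtil' : ∀ t < T,
      Ptil' (t + 1) = P' (t + 1) + γ • (P' (t + 1) * (1 - γ • P' (t + 1))⁻¹ * P' (t + 1)))
    (hK' : ∀ t < T, K' t = -((B'ᵀ * Ptil' (t + 1) * B' + R)⁻¹ * (B'ᵀ * Ptil' (t + 1) * A')))
    (hP' : ∀ t < T,
      P' t = Q + (K' t)ᵀ * R * K' t + (A' + B' * K' t)ᵀ * Ptil' (t + 1) * (A' + B' * K' t))
    -- uniform norm bounds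
    (hΓ : 1 ≤ Γ) (hγΓ : 0 < 1 - γ * Γ)
    (hAn : ‖A‖ ≤ Γ - 1) (hBn : ‖B‖ ≤ Γ - 1) (hQn : ‖Q‖ ≤ Γ - 1) (hQTn : ‖QT‖ ≤ Γ - 1)
    (hRn : ‖R‖ ≤ Γ - 1)
    (hPn : ∀ t ≤ T, ‖P t‖ ≤ Γ - 1)
    (hPtiln : ∀ t, 1 ≤ t → t ≤ T → ‖Ptil t‖ ≤ Γ - 1)
    (hKn : ∀ t < T, ‖K t‖ ≤ Γ - 1)
    -- constants
    (L V : ℝ) (hLdef : L = 1 / (1 - γ * Γ) ^ 2) (hVdef : V = 2 * (L + 1) * Γ ^ 3)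
    -- perturbation size
    (hε : 0 < ε) (hAdiff : ‖A' - A‖ ≤ ε) (hBdiff : ‖B' - B‖ ≤ ε)
    (hsmall : (10 * V ^ 2 * L * Γ ^ 4) ^ T * ε ≤ 1) :
    ∀ t < T,
      ‖K' t - K t‖ ≤ (10 * V ^ 2 * L * Γ ^ 4) ^ (T - t - 1) * V * ε ∧
      ‖P' t - P t‖ ≤ (10 * V ^ 2 * L * Γ ^ 4) ^ (T - t) * ε :=
  leqr_riccati_perturbation_general T γ Γ ε A A' B B' Q QT R hγ hQ hQT hR P Ptil K hPT hwf hPtil hK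
    hP P' Ptil' K' hPT' hwf' hPtil' hK' hP' hΓ hγΓ hAn hBn hRn hPn hPtiln hKn L V hLdef hVdef hε
    hAdiff hBdiff hsmall
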